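/- Let G = (V,E) be a finite nonempty connected simple graph in which every vertex has degree at most Δ, and let k ≥ 1 be an integer. Let S_1, …, S_m be pairwise disjoint subsets of V such that for every i ≤ m: (i) any two distinct vertices of S_i are at distance at least k from each other, and (ii) every vertex u ∈ V \ (S_1 ∪ … ∪ S_i) is at distance at most k−1 from some vertex of S_i. If m ≥ Δ^{k−1} + 1, then S_1 ∪ … ∪ S_m = V. -/
import Mathlib

open Finset

lemma exists_pred_aux {V : Type*} (G : SimpleGraph V) (hG : G.Connected) (u v : V) (d : ℕ)
    (h : G.dist u v = d + 1) : ∃ w, G.Adj w v ∧ G.dist u w = d := by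
  have hne : G.dist v u ≠ 0 := by rw [SimpleGraph.dist_comm]; omega
  obtain ⟨p, hp⟩ := SimpleGraph.exists_walk_of_dist_ne_zero hne
  cases p with
  | nil =>
    simp only [SimpleGraph.Walk.length_nil] at hp
    rw [SimpleGraph.dist_comm] at h; omega
  | @cons _ w _ hadj q =>
    refine ⟨w, hadj.symm, ?_⟩
    simp only [SimpleGraph.Walk.length_cons] at hp
    rw [SimpleGraph.dist_comm (u:=u) (v:=v)] at h
    have hq : q.length = d := by omega
    have h1 : G.dist u w ≤ d := by
      rw [SimpleGraph.dist_comm]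
      calc G.dist w u ≤ q.length := SimpleGraph.dist_le q
        _ = d := hq
    have h2 : G.dist u v ≤ G.dist u w + 1 := by
      have := hG.dist_triangle (u := u) (v := w) (w := v)
      have hwv : G.dist w v ≤ 1 := by
        rw [SimpleGraph.dist_eq_one_iff_adj.mpr hadj.symm]
      omega
    rw [SimpleGraph.dist_comm (u:=u) (v:=v)] at h2
    omega

lemma sphere_step {V : Type*} [Fintype V] [DecidableEq V] (G : SimpleGraph V)
    [DecidableRel G.Adj] (hG : G.Connected) (Δ : ℕ) (hΔ : ∀ v : V, G.degree v ≤ Δ)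
    (u : V) (d : ℕ) :
    (univ.filter (fun v => G.dist u v = d + 2)).card
      ≤ (Δ - 1) * (univ.filter (fun v => G.dist u v = d + 1)).card := by
  classical
  set T2 := univ.filter (fun v => G.dist u v = d + 2) with hT2
  set T1 := univ.filter (fun v => G.dist u v = d + 1) with hT1
  set f : V → V := fun v =>
    if h : ∃ w, G.Adj w v ∧ G.dist u w = d + 1 then h.choose else u with hf
  have hfmem : ∀ v ∈ T2, G.Adj (f v) v ∧ G.dist u (f v) = d + 1 := by
    intro v hv
    have hv' : G.dist u v = d + 2 := by simpa [hT2] using hv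
    have h : ∃ w, G.Adj w v ∧ G.dist u w = d + 1 := exists_pred_aux G hG u v (d+1) hv'
    simp only [hf, dif_pos h]
    exact h.choose_spec
  have hfT1 : ∀ v ∈ T2, f v ∈ T1 := by
    intro v hv; simp [hT1, (hfmem v hv).2]
  rw [Finset.card_eq_sum_card_fiberwise hfT1]
  have hfib : ∀ w ∈ T1, (T2.filter (fun v => f v = w)).card ≤ Δ - 1 := by
    intro w hw
    have hw' : G.dist u w = d + 1 := by simpa [hT1] using hw
    obtain ⟨w', hw'adj, hw'd⟩ := exists_pred_aux G hG u w d hw'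
    have hsub : T2.filter (fun v => f v = w) ⊆ G.neighborFinset w \ {w'} := by
      intro v hv
      rw [Finset.mem_filter] at hv
      obtain ⟨hv2, hfv⟩ := hv
      have h1 := hfmem v hv2
      rw [hfv] at h1
      have hv2' : G.dist u v = d + 2 := by simpa [hT2] using hv2
      rw [Finset.mem_sdiff, SimpleGraph.mem_neighborFinset]
      refine ⟨h1.1, ?_⟩
      simp only [Finset.mem_singleton]
      intro hvw'; rw [hvw'] at hv2'; omega
    calc (T2.filter (fun v => f v = w)).card ≤ (G.neighborFinset w \ {w'}).card :=
          Finset.card_le_card hsub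
      _ = G.degree w - 1 := by
          rw [Finset.card_sdiff_of_subset (by simp [SimpleGraph.mem_neighborFinset, hw'adj.symm]),
            Finset.card_singleton, SimpleGraph.card_neighborFinset_eq_degree]
      _ ≤ Δ - 1 := by have := hΔ w; omega
  calc (∑ w ∈ T1, (T2.filter (fun v => f v = w)).card) ≤ ∑ _w ∈ T1, (Δ - 1) :=
        Finset.sum_le_sum hfib
    _ = (Δ - 1) * T1.card := by rw [Finset.sum_const, smul_eq_mul, mul_comm]

lemma sphere_card_le {V : Type*} [Fintype V] [DecidableEq V] (G : SimpleGraph V)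
    [DecidableRel G.Adj] (hG : G.Connected) (Δ : ℕ) (hΔ : ∀ v : V, G.degree v ≤ Δ)
    (u : V) : ∀ d : ℕ, (univ.filter (fun v => G.dist u v = d + 1)).card ≤ Δ * (Δ - 1) ^ d := by
  intro d
  induction d with
  | zero =>
    have : univ.filter (fun v => G.dist u v = 1) = G.neighborFinset u := by
      ext v; simp [SimpleGraph.dist_eq_one_iff_adj, SimpleGraph.mem_neighborFinset]
    rw [this, SimpleGraph.card_neighborFinset_eq_degree]
    simpa using hΔ u
  | succ n ih =>
    calc (univ.filter (fun v => G.dist u v = n + 2)).card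
        ≤ (Δ - 1) * (univ.filter (fun v => G.dist u v = n + 1)).card :=
          sphere_step G hG Δ hΔ u n
      _ ≤ (Δ - 1) * (Δ * (Δ - 1) ^ n) := Nat.mul_le_mul_left _ ih
      _ = Δ * (Δ - 1) ^ (n + 1) := by ring

lemma sum_geom_le_pow (Δ : ℕ) : ∀ r : ℕ, (∑ d ∈ range r, Δ * (Δ - 1) ^ d) ≤ Δ ^ r := by
  intro r
  induction r with
  | zero => simp
  | succ n ih =>
    rw [Finset.sum_range_succ' (fun d => Δ * (Δ - 1) ^ d) n]
    have key : (∑ d ∈ range n, Δ * (Δ - 1) ^ (d + 1))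
        = (Δ - 1) * ∑ d ∈ range n, Δ * (Δ - 1) ^ d := by
      rw [Finset.mul_sum]; apply Finset.sum_congr rfl; intro d _; ring
    rw [key]
    rcases Nat.eq_zero_or_pos Δ with hΔ0 | hΔpos
    · subst hΔ0; simp
    · rcases Nat.eq_zero_or_pos n with hn0 | hnpos
      · subst hn0; simpa using Nat.le_refl Δ
      · have h1 : (Δ - 1) * (∑ d ∈ range n, Δ * (Δ - 1) ^ d) ≤ (Δ - 1) * Δ ^ n :=
          Nat.mul_le_mul_left _ ih
        have h2 : Δ ≤ Δ ^ n := Nat.le_self_pow (by omega) Δ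
        have h3 : (Δ - 1) * Δ ^ n + Δ ≤ Δ ^ (n + 1) := by
          calc (Δ - 1) * Δ ^ n + Δ ≤ (Δ - 1) * Δ ^ n + Δ ^ n := by omega
            _ = ((Δ - 1) + 1) * Δ ^ n := by ring
            _ = Δ * Δ ^ n := by rw [Nat.sub_add_cancel hΔpos]
            _ = Δ ^ (n + 1) := by ring
        calc (Δ - 1) * (∑ d ∈ range n, Δ * (Δ - 1) ^ d) + Δ * (Δ - 1) ^ 0
            ≤ (Δ - 1) * Δ ^ n + Δ := by simpa using Nat.add_le_add h1 (le_refl Δ)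
          _ ≤ Δ ^ (n + 1) := h3

lemma ball_card_le {V : Type*} [Fintype V] [DecidableEq V] (G : SimpleGraph V)
    [DecidableRel G.Adj] (hG : G.Connected) (Δ : ℕ) (hΔ : ∀ v : V, G.degree v ≤ Δ)
    (u : V) (r : ℕ) :
    (univ.filter (fun v => v ≠ u ∧ G.dist u v ≤ r)).card ≤ Δ ^ r := by
  have hsub : univ.filter (fun v => v ≠ u ∧ G.dist u v ≤ r)
      ⊆ (range r).biUnion (fun d => univ.filter (fun v => G.dist u v = d + 1)) := by
    intro v hv
    rw [mem_filter] at hv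
    obtain ⟨-, hvne, hvd⟩ := hv
    have h0 : G.dist u v ≠ 0 := by
      rw [ne_eq, hG.dist_eq_zero_iff]
      exact fun h => hvne h.symm
    rw [mem_biUnion]
    exact ⟨G.dist u v - 1, by rw [mem_range]; omega, by simp; omega⟩
  calc (univ.filter (fun v => v ≠ u ∧ G.dist u v ≤ r)).card
      ≤ ((range r).biUnion (fun d => univ.filter (fun v => G.dist u v = d + 1))).card :=
        Finset.card_le_card hsub
    _ ≤ ∑ d ∈ range r, (univ.filter (fun v => G.dist u v = d + 1)).card :=
        Finset.card_biUnion_le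
    _ ≤ ∑ d ∈ range r, Δ * (Δ - 1) ^ d :=
        Finset.sum_le_sum (fun d _ => sphere_card_le G hG Δ hΔ u d)
    _ ≤ Δ ^ r := sum_geom_le_pow Δ r

theorem stmt8 {V : Type*} [Fintype V] (G : SimpleGraph V) [DecidableRel G.Adj]
    (hG : G.Connected) (Δ k : ℕ) (hk : 1 ≤ k)
    (hΔ : ∀ v : V, G.degree v ≤ Δ)
    (m : ℕ) (S : Fin m → Set V)
    (hdisj : ∀ i j : Fin m, i ≠ j → Disjoint (S i) (S j))
    (hsep : ∀ i : Fin m, ∀ u ∈ S i, ∀ v ∈ S i, u ≠ v → k ≤ G.dist u v)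
    (hmax : ∀ i : Fin m, ∀ u : V, u ∉ (⋃ j ≤ i, S j) → ∃ s ∈ S i, G.dist u s ≤ k - 1)
    (hm : Δ ^ (k - 1) + 1 ≤ m) :
    (⋃ i, S i) = Set.univ := by
  classical
  by_contra hne
  obtain ⟨u, hu⟩ := (Set.ne_univ_iff_exists_notMem _).mp hne
  have hunot : ∀ i : Fin m, u ∉ S i := fun i hi => hu (Set.mem_iUnion.mpr ⟨i, hi⟩)
  have hs : ∀ i : Fin m, ∃ s ∈ S i, G.dist u s ≤ k - 1 := by
    intro i
    apply hmax i u
    intro hmem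
    simp only [Set.mem_iUnion] at hmem
    obtain ⟨j, _, hj⟩ := hmem
    exact hunot j hj
  choose s hsS hsd using hs
  have hinj : Function.Injective s := by
    intro i j hij
    by_contra hne'
    exact (Set.disjoint_left.mp (hdisj i j hne') (hsS i)) (by rw [hij]; exact hsS j)
  have hmem : ∀ i, s i ∈ Finset.univ.filter (fun v => v ≠ u ∧ G.dist u v ≤ k - 1) := by
    intro i
    simp only [Finset.mem_filter, Finset.mem_univ, true_and]
    exact ⟨fun h => hunot i (h ▸ hsS i), hsd i⟩
  have h1 : m ≤ (Finset.univ.filter (fun v => v ≠ u ∧ G.dist u v ≤ k - 1)).card := by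
    calc m = (Finset.univ.image s).card := by
          rw [Finset.card_image_of_injective _ hinj, Finset.card_univ, Fintype.card_fin]
      _ ≤ _ := Finset.card_le_card (by
          intro v hv
          simp only [Finset.mem_image, Finset.mem_univ, true_and] at hv
          obtain ⟨i, rfl⟩ := hv
          exact hmem i)
  have h2 := ball_card_le G hG Δ hΔ u (k - 1)
  omega
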